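/- There exists an equivalence relation E on ℝ such that E has exactly 2^ℵ₀ many equivalence classes (the quotient ℝ/E has cardinality of the continuum), yet there is no nonempty perfect set P ⊆ ℝ whose elements are pairwise E-inequivalent (i.e., no nonempty perfect set such that any two distinct elements of it lie in different E-classes). -/
import Mathlib


open Cardinal Set

abbrev Idx : Type := continuum.{0}.ord.ToType

def pts3 (t : ℝ × ℝ × ℝ) : Set ℝ := {t.1, t.2.1, t.2.2}



/-- Closed subsets of ℝ: at most continuum many. -/
lemma mk_closeds_le_continuum : #{C : Set ℝ // IsClosed C} ≤ continuum := by
  have hsub : ∀ C D : Set ℝ, IsClosed D →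
      (∀ p : ℚ × ℚ, (Ioo (p.1 : ℝ) p.2 ∩ C).Nonempty → (Ioo (p.1 : ℝ) p.2 ∩ D).Nonempty) →
      C ⊆ D := by
    intro C D hD h x hx
    rw [← hD.closure_eq]
    rw [mem_closure_iff]
    intro o ho hxo
    obtain ⟨ε, εpos, hball⟩ := Metric.isOpen_iff.mp ho x hxo
    obtain ⟨q1, hq1, hq1'⟩ := exists_rat_btwn (show x - ε < x by linarith)
    obtain ⟨q2, hq2, hq2'⟩ := exists_rat_btwn (show x < x + ε by linarith)
    have hsub : Ioo (q1 : ℝ) q2 ⊆ o := by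
      intro y hy
      apply hball
      rw [Metric.mem_ball, Real.dist_eq, abs_lt]
      obtain ⟨h1, h2⟩ := hy
      constructor <;> nlinarith
    obtain ⟨y, hy, hyD⟩ := h (q1, q2) ⟨x, ⟨hq1', hq2⟩, hx⟩
    exact ⟨y, hsub hy, hyD⟩
  have hinj : Function.Injective (fun C : {C : Set ℝ // IsClosed C} =>
      {p : ℚ × ℚ | (Ioo (p.1 : ℝ) p.2 ∩ C.1).Nonempty}) := by
    intro C D h
    simp only [Set.ext_iff, mem_setOf_eq] at h
    apply Subtype.ext
    apply le_antisymm
    · exact hsub C.1 D.1 D.2 fun p hp => (h p).1 hp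
    · exact hsub D.1 C.1 C.2 fun p hp => (h p).2 hp
  calc #{C : Set ℝ // IsClosed C} ≤ #(Set (ℚ × ℚ)) := Cardinal.mk_le_of_injective hinj
    _ = 2 ^ #(ℚ × ℚ) := Cardinal.mk_set
    _ = continuum := by rw [Cardinal.mk_eq_aleph0 (ℚ × ℚ), two_power_aleph0]

lemma perfect_Icc_self (a : ℝ) : Perfect (Icc a (a + 1)) := by
  refine ⟨isClosed_Icc, isPreconnected_Icc.preperfect_of_nontrivial ?_⟩
  exact ⟨a, ⟨le_refl a, by linarith⟩, a + 1, ⟨by linarith, le_refl _⟩, by linarith⟩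

lemma continuum_le_mk_of_perfect {C : Set ℝ} (hC : Perfect C) (hne : C.Nonempty) :
    continuum ≤ #C := by
  obtain ⟨f, hfC, -, hf⟩ := hC.exists_nat_bool_injection hne
  have h1 : #(ℕ → Bool) = continuum := by
    rw [← Cardinal.power_def, Cardinal.mk_bool, Cardinal.mk_nat, two_power_aleph0]
  rw [← h1]
  exact Cardinal.mk_le_of_injective (f := fun x : ℕ → Bool => (⟨f x, hfC ⟨x, rfl⟩⟩ : C))
    fun x y hxy => hf (by simpa using hxy)

lemma mk_pts3_le (t : ℝ × ℝ × ℝ) : #(pts3 t) ≤ 3 := by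
  have : pts3 t ⊆ Set.range ![t.1, t.2.1, t.2.2] := by
    intro x hx
    rcases hx with h | h | h
    · exact ⟨0, h.symm⟩
    · exact ⟨1, h.symm⟩
    · exact ⟨2, h.symm⟩
  calc #(pts3 t) ≤ #(Set.range ![t.1, t.2.1, t.2.2]) := Cardinal.mk_le_mk_of_subset this
    _ ≤ #(Fin 3) := Cardinal.mk_range_le
    _ = 3 := by simp

lemma key_pick {C S : Set ℝ} (hC : Perfect C) (hne : C.Nonempty) (hS : #S < continuum) :
    ∃ t : ℝ × ℝ × ℝ, pts3 t ⊆ C ∧ t.1 ≠ t.2.1 ∧ t.1 ≠ t.2.2 ∧ t.2.1 ≠ t.2.2 ∧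
      Disjoint (pts3 t) S := by
  have hCk := continuum_le_mk_of_perfect hC hne
  have hstep : ∀ T : Set ℝ, #T < continuum → (C \ T).Nonempty := by
    intro T hT
    rw [Set.diff_nonempty]
    intro hsub
    exact absurd (hCk.trans (Cardinal.mk_le_mk_of_subset hsub)) (not_le.mpr hT)
  obtain ⟨x, hxC, hxS⟩ := hstep S hS
  have h2 : #(S ∪ {x} : Set ℝ) < continuum := by
    refine lt_of_le_of_lt (Cardinal.mk_union_le _ _) ?_
    exact Cardinal.add_lt_of_lt aleph0_le_continuum hS
      (by rw [Cardinal.mk_singleton]; exact one_lt_aleph0.trans_le aleph0_le_continuum)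
  obtain ⟨y, hyC, hyS⟩ := hstep _ h2
  have h3 : #(S ∪ {x} ∪ {y} : Set ℝ) < continuum := by
    refine lt_of_le_of_lt (Cardinal.mk_union_le _ _) ?_
    exact Cardinal.add_lt_of_lt aleph0_le_continuum h2
      (by rw [Cardinal.mk_singleton]; exact one_lt_aleph0.trans_le aleph0_le_continuum)
  obtain ⟨z, hzC, hzS⟩ := hstep _ h3
  refine ⟨(x, y, z), ?_, ?_, ?_, ?_, ?_⟩
  · intro u hu; rcases hu with h | h | h <;> subst h <;> assumption
  · intro h; exact hyS (Or.inr (by simpa using h.symm))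
  · intro h; exact hzS (Or.inl (Or.inr (by simpa using h.symm)))
  · intro h; exact hzS (Or.inr (by simpa using h.symm))
  · rw [Set.disjoint_left]
    rintro u (h | h | h) huS <;> subst h
    · exact hxS huS
    · exact hyS (Or.inl huS)
    · exact hzS (Or.inl (Or.inl huS))

lemma mk_iUnion_pts3_lt {b : Idx} (prev : ∀ c, c < b → ℝ × ℝ × ℝ) :
    #(⋃ c : {c // c < b}, pts3 (prev c c.2)) < continuum := by
  have h1 := Cardinal.mk_iUnion_le (fun c : {c // c < b} => pts3 (prev c c.2))
  have h2 : ⨆ c : {c // c < b}, #(pts3 (prev c c.2)) ≤ 3 :=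
    ciSup_le' fun c => mk_pts3_le _
  have h3 : #{c // c < b} < continuum := Cardinal.mk_Iio_ord_toType b
  calc #(⋃ c : {c // c < b}, pts3 (prev c c.2))
      ≤ #{c // c < b} * ⨆ c : {c // c < b}, #(pts3 (prev c c.2)) := h1
    _ ≤ #{c // c < b} * 3 := mul_le_mul_right h2 _
    _ < continuum := Cardinal.mul_lt_of_lt aleph0_le_continuum h3
        ((Cardinal.nat_lt_aleph0 3).trans_le aleph0_le_continuum)

open Classical in
noncomputable def PerfSet (e : {C : Set ℝ // Perfect C ∧ C.Nonempty} ↪ Idx)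
    (b : Idx) : {C : Set ℝ // Perfect C ∧ C.Nonempty} :=
  if h : ∃ i, e i = b then h.choose
  else ⟨Icc 0 (0 + 1), perfect_Icc_self 0, 0, by norm_num⟩

noncomputable def pick (e : {C : Set ℝ // Perfect C ∧ C.Nonempty} ↪ Idx) :
    Idx → ℝ × ℝ × ℝ :=
  wellFounded_lt.fix fun b prev =>
    (key_pick (PerfSet e b).2.1 (PerfSet e b).2.2 (mk_iUnion_pts3_lt prev)).choose

lemma pick_spec (e : {C : Set ℝ // Perfect C ∧ C.Nonempty} ↪ Idx)
    (b : Idx) :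
    pts3 (pick e b) ⊆ (PerfSet e b).1 ∧ (pick e b).1 ≠ (pick e b).2.1 ∧
      (pick e b).1 ≠ (pick e b).2.2 ∧ (pick e b).2.1 ≠ (pick e b).2.2 ∧
      Disjoint (pts3 (pick e b)) (⋃ c : {c // c < b}, pts3 (pick e c)) := by
  have h : pick e b = (key_pick (PerfSet e b).2.1 (PerfSet e b).2.2
      (mk_iUnion_pts3_lt (fun c _ => pick e c))).choose :=
    WellFounded.fix_eq _ _ _
  rw [h]
  exact (key_pick (PerfSet e b).2.1 (PerfSet e b).2.2
    (mk_iUnion_pts3_lt (fun c _ => pick e c))).choose_spec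
lemma PerfSet_def (e : {C : Set ℝ // Perfect C ∧ C.Nonempty} ↪ Idx) (b : Idx)
    (h : ∃ i, e i = b) : PerfSet e b = h.choose := dif_pos h

lemma pick_pts_disjoint (e : {C : Set ℝ // Perfect C ∧ C.Nonempty} ↪ Idx) {b c : Idx}
    (h : c < b) {u v : ℝ} (hu : u ∈ pts3 (pick e b)) (hv : v ∈ pts3 (pick e c)) : u ≠ v := by
  rintro rfl
  exact Set.disjoint_left.mp (pick_spec e b).2.2.2.2 hu
    (Set.mem_iUnion.mpr ⟨⟨c, h⟩, hv⟩)

lemma exists_bernstein : ∃ B : Set ℝ, continuum ≤ #B ∧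
    ∀ C : Set ℝ, Perfect C → C.Nonempty → ∃ x ∈ C, ∃ y ∈ C, x ≠ y ∧ x ∉ B ∧ y ∉ B := by
  have hβcard : #Idx = continuum := by rw [Cardinal.mk_toType, Cardinal.card_ord]
  have hι : #{C : Set ℝ // Perfect C ∧ C.Nonempty} ≤ #Idx := by
    rw [hβcard]
    refine le_trans (Cardinal.mk_le_of_injective
      (f := fun C : {C : Set ℝ // Perfect C ∧ C.Nonempty} =>
        (⟨C.1, C.2.1.closed⟩ : {C : Set ℝ // IsClosed C})) ?_) mk_closeds_le_continuum
    intro C D h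
    simp only [Subtype.mk.injEq] at h
    exact Subtype.ext h
  obtain ⟨e⟩ := Cardinal.le_def _ _ |>.mp hι
  refine ⟨Set.range fun b : Idx => (pick e b).1, ?_, ?_⟩
  · have hinj : Function.Injective fun b : Idx => (pick e b).1 := by
      intro b c h
      by_contra hne
      rcases Ne.lt_or_gt hne with hlt | hlt
      · exact pick_pts_disjoint e hlt (Or.inl rfl) (Or.inl rfl) h.symm
      · exact pick_pts_disjoint e hlt (Or.inl rfl) (Or.inl rfl) h
    rw [Cardinal.mk_range_eq _ hinj, hβcard]
  · intro C hC hne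
    have hex : ∃ i, e i = e ⟨C, hC, hne⟩ := ⟨⟨C, hC, hne⟩, rfl⟩
    set b := e ⟨C, hC, hne⟩ with hb
    have hPb : (PerfSet e b).1 = C := by
      rw [PerfSet_def e b hex]
      have := e.injective hex.choose_spec
      rw [this]
    have hsp := pick_spec e b
    refine ⟨(pick e b).2.1, ?_, (pick e b).2.2, ?_, hsp.2.2.2.1, ?_, ?_⟩
    · exact hPb ▸ hsp.1 (Or.inr (Or.inl rfl))
    · exact hPb ▸ hsp.1 (Or.inr (Or.inr rfl))
    · rintro ⟨c, hc⟩
      rcases lt_trichotomy c b with hlt | rfl | hlt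
      · exact pick_pts_disjoint e hlt (Or.inr (Or.inl rfl)) (Or.inl rfl) hc.symm
      · exact hsp.2.1 hc
      · exact pick_pts_disjoint e hlt (Or.inl rfl) (Or.inr (Or.inl rfl)) hc
    · rintro ⟨c, hc⟩
      rcases lt_trichotomy c b with hlt | rfl | hlt
      · exact pick_pts_disjoint e hlt (Or.inr (Or.inr rfl)) (Or.inl rfl) hc.symm
      · exact hsp.2.2.1 hc
      · exact pick_pts_disjoint e hlt (Or.inl rfl) (Or.inr (Or.inr rfl)) hc

/-- There is an equivalence relation on `ℝ` with exactly continuum many equivalence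
classes, but with no nonempty perfect set of pairwise inequivalent reals. -/
theorem exists_thin_equivalence_with_continuum_classes :
    ∃ E : Setoid ℝ, #(Quotient E) = continuum ∧
      ¬ ∃ P : Set ℝ, Perfect P ∧ P.Nonempty ∧
        ∀ x ∈ P, ∀ y ∈ P, x ≠ y → ¬ E.r x y := by
  obtain ⟨B, hBcard, hB⟩ := exists_bernstein
  refine ⟨⟨fun x y => x = y ∨ (x ∉ B ∧ y ∉ B), ?_, ?_, ?_⟩, ?_, ?_⟩
  · exact fun x => Or.inl rfl
  · rintro x y (rfl | ⟨h1, h2⟩)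
    · exact Or.inl rfl
    · exact Or.inr ⟨h2, h1⟩
  · rintro x y z (rfl | ⟨h1, h2⟩) h
    · exact h
    · rcases h with rfl | ⟨h3, h4⟩
      · exact Or.inr ⟨h1, h2⟩
      · exact Or.inr ⟨h1, h4⟩
  · refine le_antisymm (le_trans Cardinal.mk_quotient_le (le_of_eq Cardinal.mk_real)) ?_
    refine le_trans hBcard (Cardinal.mk_le_of_injective
      (f := fun x : B => Quotient.mk _ (x : ℝ)) ?_)
    intro x y h
    have := Quotient.exact h
    rcases this with h' | ⟨h1, _⟩
    · exact Subtype.ext h'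
    · exact absurd x.2 h1
  · rintro ⟨P, hP, hPne, hpair⟩
    obtain ⟨x, hxP, y, hyP, hxy, hxB, hyB⟩ := hB P hP hPne
    exact hpair x hxP y hyP hxy (Or.inr ⟨hxB, hyB⟩)
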